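/- arXiv:1708.01461 — 5 statements merged into one kernel-verified Lean document; each statement's English description precedes it below -/
import Mathlib

section
/- Let P ⊆ ℝ × ℝ be orthoconvex, i.e. the intersection of P with every horizontal line {p | p.2 = c} and with every vertical line {p | p.1 = d} is convex. Suppose σ₁ ⊆ P is the horizontal segment from (x₀, c) to (x₁, c) and that x₀ ≤ p.1 ≤ x₁ for every p ∈ P (σ₁ spans P horizontally), and σ₂ ⊆ P is the vertical segment from (d, y₀) to (d, y₁) and that y₀ ≤ p.2 ≤ y₁ for every p ∈ P (σ₂ spans P vertically). Then the point φ = (d, c) belongs to P and P is star-shaped with respect to φ: for every q ∈ P, the segment from φ to q is contained in P. -/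
private lemma memH_aux (x₀ x₁ c x : ℝ) (h : x ∈ segment ℝ x₀ x₁) :
    ((x, c) : ℝ × ℝ) ∈ segment ℝ ((x₀, c) : ℝ × ℝ) ((x₁, c) : ℝ × ℝ) := by
  obtain ⟨a, b, ha, hb, hab, hx⟩ := h
  refine ⟨a, b, ha, hb, hab, ?_⟩
  have h2 : a * c + b * c = c := by linear_combination c * hab
  have h1 : a * x₀ + b * x₁ = x := by simpa [smul_eq_mul] using hx
  simp [Prod.smul_mk, smul_eq_mul, Prod.mk_add_mk, h1, h2]

private lemma memV_aux (y₀ y₁ d y : ℝ) (h : y ∈ segment ℝ y₀ y₁) :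
    ((d, y) : ℝ × ℝ) ∈ segment ℝ ((d, y₀) : ℝ × ℝ) ((d, y₁) : ℝ × ℝ) := by
  obtain ⟨a, b, ha, hb, hab, hy⟩ := h
  refine ⟨a, b, ha, hb, hab, ?_⟩
  have h2 : a * d + b * d = d := by linear_combination d * hab
  have h1 : a * y₀ + b * y₁ = y := by simpa [smul_eq_mul] using hy
  simp [Prod.smul_mk, smul_eq_mul, Prod.mk_add_mk, h1, h2]

/-- Lemma 1 of the paper: an orthoconvex region admitting a horizontal segment
spanning it horizontally and a vertical segment spanning it vertically contains
the crossing point `φ = (d, c)` and is star-shaped with respect to it. -/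
theorem orthoconvex_starShaped_of_spanning_segments
    (P : Set (ℝ × ℝ))
    (hH : ∀ c : ℝ, Convex ℝ {p ∈ P | p.2 = c})
    (hV : ∀ d : ℝ, Convex ℝ {p ∈ P | p.1 = d})
    (x₀ x₁ c : ℝ) (hx : x₀ ≤ x₁)
    (hσ₁ : segment ℝ ((x₀, c) : ℝ × ℝ) ((x₁, c) : ℝ × ℝ) ⊆ P)
    (hspan₁ : ∀ p ∈ P, x₀ ≤ p.1 ∧ p.1 ≤ x₁)
    (d y₀ y₁ : ℝ) (hy : y₀ ≤ y₁)
    (hσ₂ : segment ℝ ((d, y₀) : ℝ × ℝ) ((d, y₁) : ℝ × ℝ) ⊆ P)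
    (hspan₂ : ∀ p ∈ P, y₀ ≤ p.2 ∧ p.2 ≤ y₁) :
    ((d, c) : ℝ × ℝ) ∈ P ∧
      ∀ q ∈ P, segment ℝ ((d, c) : ℝ × ℝ) q ⊆ P := by
  -- d ∈ [x₀, x₁] and c ∈ [y₀, y₁]
  have hdy₀ : ((d, y₀) : ℝ × ℝ) ∈ P := hσ₂ (left_mem_segment ℝ _ _)
  have hxc : ((x₀, c) : ℝ × ℝ) ∈ P := hσ₁ (left_mem_segment ℝ _ _)
  have hd : x₀ ≤ d ∧ d ≤ x₁ := hspan₁ _ hdy₀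
  have hc : y₀ ≤ c ∧ c ≤ y₁ := hspan₂ _ hxc
  -- a point (x, c) with x₀ ≤ x ≤ x₁ is in P
  have memH : ∀ x : ℝ, x₀ ≤ x → x ≤ x₁ → ((x, c) : ℝ × ℝ) ∈ P := by
    intro x h1 h2
    exact hσ₁ (memH_aux x₀ x₁ c x (by rw [segment_eq_Icc hx]; exact ⟨h1, h2⟩))
  have memV : ∀ y : ℝ, y₀ ≤ y → y ≤ y₁ → ((d, y) : ℝ × ℝ) ∈ P := by
    intro y h1 h2
    exact hσ₂ (memV_aux y₀ y₁ d y (by rw [segment_eq_Icc hy]; exact ⟨h1, h2⟩))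
  have hφ : ((d, c) : ℝ × ℝ) ∈ P := memH d hd.1 hd.2
  refine ⟨hφ, ?_⟩
  intro q hq r hr
  obtain ⟨a, b, ha, hb, hab, hrev⟩ := hr
  have hq1 := hspan₁ q hq
  have hq2 := hspan₂ q hq
  -- r components
  have hr1 : r.1 = a * d + b * q.1 := by
    rw [← hrev]; simp [smul_eq_mul]
  have hr2 : r.2 = a * c + b * q.2 := by
    rw [← hrev]; simp [smul_eq_mul]
  have hr1seg : r.1 ∈ segment ℝ d q.1 := ⟨a, b, ha, hb, hab, by rw [hr1]; simp [smul_eq_mul]⟩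
  have hr2seg : r.2 ∈ segment ℝ c q.2 := ⟨a, b, ha, hb, hab, by rw [hr2]; simp [smul_eq_mul]⟩
  -- r.1 ∈ [x₀, x₁]
  have hr1mem : x₀ ≤ r.1 ∧ r.1 ≤ x₁ := by
    have : segment ℝ d q.1 ⊆ Set.Icc x₀ x₁ :=
      (convex_Icc x₀ x₁).segment_subset ⟨hd.1, hd.2⟩ ⟨hq1.1, hq1.2⟩
    exact this hr1seg
  -- (r.1, c) ∈ P
  have hA : ((r.1, c) : ℝ × ℝ) ∈ P := memH r.1 hr1mem.1 hr1mem.2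
  -- (d, q.2) ∈ P
  have hB : ((d, q.2) : ℝ × ℝ) ∈ P := memV q.2 hq2.1 hq2.2
  -- (r.1, q.2) ∈ P via horizontal convexity at height q.2
  have hC : ((r.1, q.2) : ℝ × ℝ) ∈ P := by
    have hsub : segment ℝ ((d, q.2) : ℝ × ℝ) ((q.1, q.2) : ℝ × ℝ) ⊆ {p ∈ P | p.2 = q.2} :=
      (hH q.2).segment_subset ⟨hB, rfl⟩ ⟨by simpa using hq, rfl⟩
    exact (hsub (memH_aux d q.1 q.2 r.1 hr1seg)).1
  -- r ∈ P via vertical convexity at abscissa r.1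
  have hsub : segment ℝ ((r.1, c) : ℝ × ℝ) ((r.1, q.2) : ℝ × ℝ) ⊆ {p ∈ P | p.1 = r.1} :=
    (hV r.1).segment_subset ⟨hA, rfl⟩ ⟨hC, rfl⟩
  have := hsub (memV_aux c q.2 r.1 r.2 hr2seg)
  simpa using this.1
end

section
/- Let P ⊆ ℝ × ℝ be orthoconvex, i.e. the intersection of P with every horizontal line {p | p.2 = c} and with every vertical line {p | p.1 = d} is convex. Suppose P admits a horizontal segment σ₁ ⊆ P spanning P horizontally and a vertical segment σ₂ ⊆ P spanning P vertically. Then the kernel of P is nonempty: there exists a point φ ∈ P such that for every q ∈ P, the segment from φ to q is contained in P. -/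
/-- vertical segment membership -/
lemma mem_vseg {k a b x : ℝ} (h1 : a ≤ x) (h2 : x ≤ b) :
    ((k, x) : ℝ × ℝ) ∈ segment ℝ ((k, a) : ℝ × ℝ) ((k, b) : ℝ × ℝ) := by
  have hx : x ∈ segment ℝ a b := by
    rw [segment_eq_Icc (h1.trans h2)]; exact ⟨h1, h2⟩
  rcases hx with ⟨u, v, hu, hv, huv, hx⟩
  simp only [smul_eq_mul] at hx
  exact ⟨u, v, hu, hv, huv, by
    simp only [Prod.smul_mk, Prod.mk_add_mk, smul_eq_mul, Prod.mk.injEq]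
    exact ⟨by linear_combination huv * k, hx⟩⟩

/-- horizontal segment membership -/
lemma mem_hseg {k a b x : ℝ} (h1 : a ≤ x) (h2 : x ≤ b) :
    ((x, k) : ℝ × ℝ) ∈ segment ℝ ((a, k) : ℝ × ℝ) ((b, k) : ℝ × ℝ) := by
  have hx : x ∈ segment ℝ a b := by
    rw [segment_eq_Icc (h1.trans h2)]; exact ⟨h1, h2⟩
  rcases hx with ⟨u, v, hu, hv, huv, hx⟩
  simp only [smul_eq_mul] at hx
  exact ⟨u, v, hu, hv, huv, by
    simp only [Prod.smul_mk, Prod.mk_add_mk, smul_eq_mul, Prod.mk.injEq]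
    exact ⟨hx, by linear_combination huv * k⟩⟩

/-- Lemma 1 (kernel version): an orthoconvex region admitting a spanning
horizontal segment and a spanning vertical segment has a nonempty kernel. -/
theorem orthoconvex_kernel_nonempty
    (P : Set (ℝ × ℝ))
    (hH : ∀ c : ℝ, Convex ℝ {p ∈ P | p.2 = c})
    (hV : ∀ d : ℝ, Convex ℝ {p ∈ P | p.1 = d})
    (x₀ x₁ c : ℝ) (hx : x₀ ≤ x₁)
    (hσ₁ : segment ℝ ((x₀, c) : ℝ × ℝ) ((x₁, c) : ℝ × ℝ) ⊆ P)
    (hspan₁ : ∀ p ∈ P, x₀ ≤ p.1 ∧ p.1 ≤ x₁)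
    (d y₀ y₁ : ℝ) (hy : y₀ ≤ y₁)
    (hσ₂ : segment ℝ ((d, y₀) : ℝ × ℝ) ((d, y₁) : ℝ × ℝ) ⊆ P)
    (hspan₂ : ∀ p ∈ P, y₀ ≤ p.2 ∧ p.2 ≤ y₁) :
    ∃ φ ∈ P, ∀ q ∈ P, segment ℝ φ q ⊆ P := by
  have hc : y₀ ≤ c ∧ c ≤ y₁ := hspan₂ (x₀, c) (hσ₁ (left_mem_segment ℝ _ _))
  have hd : x₀ ≤ d ∧ d ≤ x₁ := hspan₁ (d, y₀) (hσ₂ (left_mem_segment ℝ _ _))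
  have hφ : ((d, c) : ℝ × ℝ) ∈ P := hσ₂ (mem_vseg hc.1 hc.2)
  refine ⟨(d, c), hφ, ?_⟩
  intro q hq p hp
  rcases hp with ⟨u, v, hu, hv, huv, hp⟩
  have hq1 := hspan₁ q hq
  have hq2 := hspan₂ q hq
  -- the point (q.1, c) lies on σ₁
  have h1 : ((q.1, c) : ℝ × ℝ) ∈ P := hσ₁ (mem_hseg hq1.1 hq1.2)
  -- vertical convexity at x = q.1
  have h2 : ((q.1, u * c + v * q.2) : ℝ × ℝ) ∈ P := by
    have := hV q.1 (x := (q.1, c)) (y := q) ⟨h1, rfl⟩ ⟨hq, rfl⟩ hu hv huv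
    have heq : u • ((q.1, c) : ℝ × ℝ) + v • q = (q.1, u * c + v * q.2) := by
      ext
      · show u * q.1 + v * q.1 = q.1; linear_combination huv * q.1
      · rfl
    rw [heq] at this
    exact this.1
  -- (d, u*c+v*q.2) lies on σ₂
  have h3 : ((d, u * c + v * q.2) : ℝ × ℝ) ∈ P := by
    have e1 : u * y₀ + v * y₀ = y₀ := by linear_combination huv * y₀
    have e2 : u * y₁ + v * y₁ = y₁ := by linear_combination huv * y₁
    refine hσ₂ (mem_vseg ?_ ?_) <;>
      nlinarith [mul_le_mul_of_nonneg_left hc.1 hu, mul_le_mul_of_nonneg_left hc.2 hu,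
        mul_le_mul_of_nonneg_left hq2.1 hv, mul_le_mul_of_nonneg_left hq2.2 hv]
  -- horizontal convexity at y = u*c+v*q.2
  have h4 := hH (u * c + v * q.2) (x := (d, u * c + v * q.2))
    (y := (q.1, u * c + v * q.2)) ⟨h3, rfl⟩ ⟨h2, rfl⟩ hu hv huv
  have heq : u • ((d, u * c + v * q.2) : ℝ × ℝ)
      + v • ((q.1, u * c + v * q.2) : ℝ × ℝ) = p := by
    rw [← hp]
    ext
    · rfl
    · show u * (u * c + v * q.2) + v * (u * c + v * q.2) = u * c + v * q.2
      linear_combination huv * (u * c + v * q.2)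
  rw [heq] at h4
  exact h4.1
end

section
/- Let P ⊆ ℝ × ℝ be orthoconvex, i.e. the intersection of P with every horizontal line {p | p.2 = c} and with every vertical line {p | p.1 = d} is convex. Suppose σ₁ ⊆ P is the horizontal segment from (x₀, c) to (x₁, c) with x₀ ≤ p.1 ≤ x₁ for every p ∈ P, and σ₂ ⊆ P is the vertical segment from (d, y₀) to (d, y₁) with y₀ ≤ p.2 ≤ y₁ for every p ∈ P. Set φ = (d, c). Then the quadrant piece P₁ = P ∩ {p | d ≤ p.1 ∧ c ≤ p.2} is a fan with core vertex φ: for every q ∈ P with d ≤ q.1 and c ≤ q.2, the segment from φ to q is contained in P ∩ {p | d ≤ p.1 ∧ c ≤ p.2}. -/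
/-- The upper-right quadrant piece `P₁ = P ∩ {p | d ≤ p.1 ∧ c ≤ p.2}` of an
orthoconvex region with spanning segments is a fan with core vertex
`φ = (d, c)`. -/
theorem quadrant_piece_is_fan
    (P : Set (ℝ × ℝ))
    (hH : ∀ c : ℝ, Convex ℝ {p ∈ P | p.2 = c})
    (hV : ∀ d : ℝ, Convex ℝ {p ∈ P | p.1 = d})
    (x₀ x₁ c : ℝ) (hx : x₀ ≤ x₁)
    (hσ₁ : segment ℝ ((x₀, c) : ℝ × ℝ) ((x₁, c) : ℝ × ℝ) ⊆ P)
    (hspan₁ : ∀ p ∈ P, x₀ ≤ p.1 ∧ p.1 ≤ x₁)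
    (d y₀ y₁ : ℝ) (hy : y₀ ≤ y₁)
    (hσ₂ : segment ℝ ((d, y₀) : ℝ × ℝ) ((d, y₁) : ℝ × ℝ) ⊆ P)
    (hspan₂ : ∀ p ∈ P, y₀ ≤ p.2 ∧ p.2 ≤ y₁) :
    ∀ q ∈ P, d ≤ q.1 → c ≤ q.2 →
      segment ℝ ((d, c) : ℝ × ℝ) q ⊆ P ∩ {p : ℝ × ℝ | d ≤ p.1 ∧ c ≤ p.2} := by
  have hseg1 : ∀ t : ℝ, x₀ ≤ t → t ≤ x₁ → ((t, c) : ℝ × ℝ) ∈ P := by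
    intro t ht0 ht1
    apply hσ₁
    have : t ∈ segment ℝ x₀ x₁ := by
      rw [segment_eq_Icc hx]; exact ⟨ht0, ht1⟩
    obtain ⟨a, b, ha, hb, hab, heq⟩ := this
    simp only [smul_eq_mul] at heq
    refine ⟨a, b, ha, hb, hab, ?_⟩
    have h2 : a * c + b * c = c := by linear_combination c * hab
    simp [Prod.ext_iff, Prod.smul_def, smul_eq_mul, heq, h2]
  have hseg2 : ∀ t : ℝ, y₀ ≤ t → t ≤ y₁ → ((d, t) : ℝ × ℝ) ∈ P := by
    intro t ht0 ht1
    apply hσ₂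
    have : t ∈ segment ℝ y₀ y₁ := by
      rw [segment_eq_Icc hy]; exact ⟨ht0, ht1⟩
    obtain ⟨a, b, ha, hb, hab, heq⟩ := this
    simp only [smul_eq_mul] at heq
    refine ⟨a, b, ha, hb, hab, ?_⟩
    have h2 : a * d + b * d = d := by linear_combination d * hab
    simp [Prod.ext_iff, Prod.smul_def, smul_eq_mul, heq, h2]
  have hdy0 : ((d, y₀) : ℝ × ℝ) ∈ P := hσ₂ (left_mem_segment _ _ _)
  have hdx : x₀ ≤ d ∧ d ≤ x₁ := hspan₁ _ hdy0
  have hdc : ((d, c) : ℝ × ℝ) ∈ P := hseg1 d hdx.1 hdx.2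
  have hcy : y₀ ≤ c ∧ c ≤ y₁ := hspan₂ _ hdc
  intro q hq hqd hqc r hr
  obtain ⟨a, b, ha, hb, hab, heq⟩ := hr
  have hr1 : r.1 = a * d + b * q.1 := by rw [← heq]; simp [Prod.smul_def]
  have hr2 : r.2 = a * c + b * q.2 := by rw [← heq]; simp [Prod.smul_def]
  have hqx : x₀ ≤ q.1 ∧ q.1 ≤ x₁ := hspan₁ _ hq
  have hqy : y₀ ≤ q.2 ∧ q.2 ≤ y₁ := hspan₂ _ hq
  have hq1c : ((q.1, c) : ℝ × ℝ) ∈ P := hseg1 q.1 hqx.1 hqx.2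
  have hA : ((q.1, r.2) : ℝ × ℝ) ∈ P := by
    have h := hV q.1 (x := ((q.1, c) : ℝ × ℝ)) (y := q) ⟨hq1c, rfl⟩ ⟨hq, rfl⟩ ha hb hab
    have h1 : a * q.1 + b * q.1 = q.1 := by linear_combination q.1 * hab
    have hcombo : a • ((q.1, c) : ℝ × ℝ) + b • q = (q.1, r.2) := by
      simp [Prod.ext_iff, Prod.smul_def, smul_eq_mul, hr2, h1]
    rw [hcombo] at h
    exact h.1
  have hB : ((d, r.2) : ℝ × ℝ) ∈ P := by
    apply hseg2
    · rw [hr2]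
      have hk : a * y₀ + b * y₀ = y₀ := by linear_combination y₀ * hab
      nlinarith [mul_le_mul_of_nonneg_left hcy.1 ha, mul_le_mul_of_nonneg_left hqy.1 hb]
    · rw [hr2]
      have hk : a * y₁ + b * y₁ = y₁ := by linear_combination y₁ * hab
      nlinarith [mul_le_mul_of_nonneg_left hcy.2 ha, mul_le_mul_of_nonneg_left hqy.2 hb]
  have hrP : r ∈ P := by
    have h := hH r.2 (x := ((d, r.2) : ℝ × ℝ)) (y := ((q.1, r.2) : ℝ × ℝ)) ⟨hB, rfl⟩ ⟨hA, rfl⟩ ha hb hab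
    have h1 : a * r.2 + b * r.2 = r.2 := by linear_combination r.2 * hab
    have hcombo : a • ((d, r.2) : ℝ × ℝ) + b • ((q.1, r.2) : ℝ × ℝ) = r := by
      simp [Prod.ext_iff, Prod.smul_def, smul_eq_mul, hr1.symm, h1]
    rw [hcombo] at h
    exact h.1
  refine ⟨hrP, ?_, ?_⟩
  · rw [hr1]
    have hk : a * d + b * d = d := by linear_combination d * hab
    nlinarith [mul_le_mul_of_nonneg_left hqd hb]
  · rw [hr2]
    have hk : a * c + b * c = c := by linear_combination c * hab
    nlinarith [mul_le_mul_of_nonneg_left hqc hb]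
end

section
/- Let P ⊆ ℝ × ℝ be orthoconvex, i.e. the intersection of P with every horizontal line {p | p.2 = c} and with every vertical line {p | p.1 = d} is convex. Suppose σ₁ ⊆ P is the horizontal segment from (x₀, c) to (x₁, c) with x₀ ≤ p.1 ≤ x₁ for every p ∈ P, and σ₂ ⊆ P is the vertical segment from (d, y₀) to (d, y₁) with y₀ ≤ p.2 ≤ y₁ for every p ∈ P. Then for every q ∈ P: the point (q.1, c) lies in P and the vertical segment from (q.1, c) to q is contained in P; and the point (d, q.2) lies in P and the horizontal segment from (d, q.2) to q is contained in P. -/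
/-- Every point of an orthoconvex region with spanning segments σ₁, σ₂ is
joined to σ₁ by a vertical segment inside `P` and to σ₂ by a horizontal
segment inside `P`. -/
theorem point_joined_to_spanning_segments
    (P : Set (ℝ × ℝ))
    (hH : ∀ c : ℝ, Convex ℝ {p ∈ P | p.2 = c})
    (hV : ∀ d : ℝ, Convex ℝ {p ∈ P | p.1 = d})
    (x₀ x₁ c : ℝ) (hx : x₀ ≤ x₁)
    (hσ₁ : segment ℝ ((x₀, c) : ℝ × ℝ) ((x₁, c) : ℝ × ℝ) ⊆ P)
    (hspan₁ : ∀ p ∈ P, x₀ ≤ p.1 ∧ p.1 ≤ x₁)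
    (d y₀ y₁ : ℝ) (hy : y₀ ≤ y₁)
    (hσ₂ : segment ℝ ((d, y₀) : ℝ × ℝ) ((d, y₁) : ℝ × ℝ) ⊆ P)
    (hspan₂ : ∀ p ∈ P, y₀ ≤ p.2 ∧ p.2 ≤ y₁) :
    ∀ q ∈ P,
      (((q.1, c) : ℝ × ℝ) ∈ P ∧ segment ℝ ((q.1, c) : ℝ × ℝ) q ⊆ P) ∧
      (((d, q.2) : ℝ × ℝ) ∈ P ∧ segment ℝ ((d, q.2) : ℝ × ℝ) q ⊆ P) := by
  intro q hq
  have h1 : ((q.1, c) : ℝ × ℝ) ∈ P := by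
    apply hσ₁
    have : q.1 ∈ segment ℝ x₀ x₁ := by
      rw [segment_eq_Icc hx]
      exact ⟨(hspan₁ q hq).1, (hspan₁ q hq).2⟩
    obtain ⟨a, b, ha, hb, hab, hx'⟩ := this
    exact ⟨a, b, ha, hb, hab, by
      simp only [Prod.smul_mk, Prod.mk_add_mk, Prod.mk.injEq, smul_eq_mul]
      exact ⟨hx', by rw [← add_mul, hab, one_mul]⟩⟩
  have h2 : ((d, q.2) : ℝ × ℝ) ∈ P := by
    apply hσ₂
    have : q.2 ∈ segment ℝ y₀ y₁ := by
      rw [segment_eq_Icc hy]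
      exact ⟨(hspan₂ q hq).1, (hspan₂ q hq).2⟩
    obtain ⟨a, b, ha, hb, hab, hy'⟩ := this
    exact ⟨a, b, ha, hb, hab, by
      simp only [Prod.smul_mk, Prod.mk_add_mk, Prod.mk.injEq, smul_eq_mul]
      exact ⟨by rw [← add_mul, hab, one_mul], hy'⟩⟩
  refine ⟨⟨h1, ?_⟩, ⟨h2, ?_⟩⟩
  · have := (hV q.1).segment_subset (x := ((q.1, c) : ℝ × ℝ)) (y := q)
      ⟨h1, rfl⟩ ⟨hq, rfl⟩
    exact fun p hp => (this hp).1
  · have := (hH q.2).segment_subset (x := ((d, q.2) : ℝ × ℝ)) (y := q)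
      ⟨h2, rfl⟩ ⟨hq, rfl⟩
    exact fun p hp => (this hp).1
end

section
/- Let P ⊆ ℝ × ℝ be x-monotone, i.e. the intersection of P with every vertical line {p | p.1 = d} is convex. Suppose P contains the horizontal segment from (x₀, c₁) to (x₁, c₁) and the horizontal segment from (x₀, c₂) to (x₁, c₂), where c₁ ≤ c₂ and x₀ ≤ p.1 ≤ x₁ for every p ∈ P. Then for every c with c₁ ≤ c ≤ c₂, the horizontal segment from (x₀, c) to (x₁, c) is also contained in P. -/
open Set

theorem Convex.mk_mem_of_mem_segment {𝕜 E F : Type*} [Semiring 𝕜] [PartialOrder 𝕜]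
    [AddCommMonoid E] [AddCommMonoid F] [Module 𝕜 E] [Module 𝕜 F] {P : Set (E × F)} {x : E}
    (hP : Convex 𝕜 {p ∈ P | p.1 = x}) {y₁ y₂ y : F} (h₁ : (x, y₁) ∈ P) (h₂ : (x, y₂) ∈ P)
    (hy : y ∈ segment 𝕜 y₁ y₂) : (x, y) ∈ P := by
  have hmem : (x, y) ∈ segment 𝕜 (x, y₁) (x, y₂) :=
    Prod.image_mk_segment_right (𝕜 := 𝕜) x y₁ y₂ ▸ mem_image_of_mem _ hy
  exact (hP.segment_subset ⟨h₁, rfl⟩ ⟨h₂, rfl⟩ hmem).1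

theorem corridor_horizontal_segments_general
    (P : Set (ℝ × ℝ))
    (hV : ∀ d : ℝ, Convex ℝ {p ∈ P | p.1 = d})
    (x₀ x₁ c₁ c₂ : ℝ)
    (hσ₁ : segment ℝ ((x₀, c₁) : ℝ × ℝ) ((x₁, c₁) : ℝ × ℝ) ⊆ P)
    (hσ₂ : segment ℝ ((x₀, c₂) : ℝ × ℝ) ((x₁, c₂) : ℝ × ℝ) ⊆ P) :
    ∀ c : ℝ, c₁ ≤ c → c ≤ c₂ →
      segment ℝ ((x₀, c) : ℝ × ℝ) ((x₁, c) : ℝ × ℝ) ⊆ P := by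
  intro c hc₁ hc₂
  simp only [← Prod.image_mk_segment_left, image_subset_iff] at hσ₁ hσ₂ ⊢
  exact fun x hx ↦
    (hV x).mk_mem_of_mem_segment (hσ₁ hx) (hσ₂ hx) (Icc_subset_segment ⟨hc₁, hc₂⟩)

/-- The align segment of a balanced polygon is not unique: any horizontal
segment at a height between two spanning heights is contained in `P`. -/
theorem corridor_horizontal_segments
    (P : Set (ℝ × ℝ))
    (hV : ∀ d : ℝ, Convex ℝ {p ∈ P | p.1 = d})
    (x₀ x₁ c₁ c₂ : ℝ) (hc : c₁ ≤ c₂)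
    (hσ₁ : segment ℝ ((x₀, c₁) : ℝ × ℝ) ((x₁, c₁) : ℝ × ℝ) ⊆ P)
    (hσ₂ : segment ℝ ((x₀, c₂) : ℝ × ℝ) ((x₁, c₂) : ℝ × ℝ) ⊆ P)
    (hspan : ∀ p ∈ P, x₀ ≤ p.1 ∧ p.1 ≤ x₁) :
    ∀ c : ℝ, c₁ ≤ c → c ≤ c₂ →
      segment ℝ ((x₀, c) : ℝ × ℝ) ((x₁, c) : ℝ × ℝ) ⊆ P :=
  corridor_horizontal_segments_general P hV x₀ x₁ c₁ c₂ hσ₁ hσ₂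
end
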